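/- Let m ≥ 1. The map ϑ_m : dk_{m,n} → dk_{m−1,n+1} sends the ideal [c,c] into the corresponding ideal of dk_{m−1,n+1} and hence induces a Lie algebra homomorphism ϑ_m : edk_{m,n} → edk_{m−1,n+1}. For u ∈ lie_m and 1 ≤ i ≤ n: ϑ_m(u_i) = (u(x_1,…,x_{m−1},0))_{i+1} + ((∂_m u)(x_1,…,x_{m−1},0))_{1(i+1)}, where g(x_1,…,x_{m−1},0) denotes the image of g ∈ ass_m under the algebra homomorphism ass_m → ass_{m−1} with x_p ↦ x_p for p < m and x_m ↦ 0. For w ∈ ass_m and 1 ≤ i < j ≤ n: ϑ_m(w_{ij}) = (w(x_1,…,x_{m−1},0))_{(i+1)(j+1)}. -/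

import Mathlib

noncomputable section

open scoped TensorProduct

attribute [local instance 100] LieRing.ofAssociativeRing

/-- The free unital associative algebra over `ℚ` on `N` generators. -/
abbrev Ass (N : ℕ) : Type := FreeAlgebra ℚ (Fin N)

/-- The `i`-th generator `x_i`. -/
def gen {N : ℕ} (i : Fin N) : Ass N := FreeAlgebra.ι ℚ i

/-- The monomial (word) associated to a list of generator indices. -/
def wordProd {N : ℕ} (l : List (Fin N)) : Ass N := (l.map gen).prod

/-- Extend a function on words (monomials) to a `ℚ`-linear map on the free algebra,
using the monomial basis. -/
def liftWord {N : ℕ} {A : Type} [AddCommGroup A] [Module ℚ A]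
    (f : List (Fin N) → A) : Ass N →ₗ[ℚ] A :=
  (FreeAlgebra.basisFreeMonoid ℚ (Fin N)).constr ℚ fun w => f w.toList

/-- `μ_gr` on a word. -/
def muWord {N : ℕ} : List (Fin N) → Ass N
  | [] => 0
  | [_] => 0
  | a :: b :: t => (if a = b then -(wordProd (a :: t)) else 0) + gen a * muWord (b :: t)

/-- The linearized self-intersection operation `μ_gr`. -/
def muGr (N : ℕ) : Ass N →ₗ[ℚ] Ass N := liftWord muWord

/-- The antipode: the anti-automorphism `ι` with `ι(x_i) = -x_i`, as a linear map. -/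
def iotaMap (N : ℕ) : Ass N →ₗ[ℚ] Ass N :=
  liftWord fun l => ((-1 : ℚ) ^ l.length) • wordProd l.reverse

/-- The (right) partial derivative `∂_i`, characterized on `lie_N` by
`a = Σ_i (∂_i a) x_i`. -/
def partialD {N : ℕ} (i : Fin N) : Ass N →ₗ[ℚ] Ass N :=
  liftWord fun l =>
    match l.getLast? with
    | some a => if a = i then wordProd l.dropLast else 0
    | none => 0

/-- `η_gr` on a pair of words. -/
def etaWord {N : ℕ} (l r : List (Fin N)) : Ass N :=
  match l.getLast?, r with
  | some a, b :: t => if a = b then -(wordProd (l.dropLast ++ a :: t)) else 0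
  | _, _ => 0

/-- The linearized homotopy intersection form `η_gr`. -/
def etaGr (N : ℕ) : Ass N →ₗ[ℚ] Ass N →ₗ[ℚ] Ass N :=
  liftWord fun l => liftWord fun r => etaWord l r

/-- Degree-`k` homogeneous part of a free algebra (word-length grading). -/
def homogS (X : Type) (k : ℕ) : Submodule ℚ (FreeAlgebra ℚ X) :=
  Submodule.span ℚ {z | ∃ l : List X, l.length = k ∧ z = (l.map (FreeAlgebra.ι ℚ)).prod}

/-- The projection onto the degree-`k` homogeneous component. -/
def homogComp {N : ℕ} (k : ℕ) : Ass N →ₗ[ℚ] Ass N :=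
  liftWord fun l => if l.length = k then wordProd l else 0

/-- The free Lie algebra on `x_1, …, x_N`, as the Lie subalgebra of `Ass N`
(with the commutator bracket) generated by the generators. -/
def lieN (N : ℕ) : LieSubalgebra ℚ (Ass N) :=
  LieSubalgebra.lieSpan ℚ (Ass N) (Set.range (gen (N := N)))

/-- The generator `x_i` as an element of `lie_N`. -/
def genL (N : ℕ) (i : Fin N) : lieN N :=
  ⟨gen i, LieSubalgebra.subset_lieSpan ⟨i, rfl⟩⟩

/-- Substitution: the algebra endomorphism of `ass_2` with `x ↦ p`, `y ↦ q`. -/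
def sub2 (p q : Ass 2) : Ass 2 →ₐ[ℚ] Ass 2 := FreeAlgebra.lift ℚ ![p, q]

/-- `x`. -/
def xA : Ass 2 := gen 0
/-- `y`. -/
def yA : Ass 2 := gen 1

/-- Equation (E1): `φ(y,0) − φ(x+y,0) = 0`. -/
def E1 (φ : Ass 2) : Prop := sub2 yA 0 φ - sub2 (xA + yA) 0 φ = 0

/-- Equation (E2): `(∂_y φ) + (∂_y φ)(y,0) − (∂_y φ)(x+y,0) − R(φ) = 0`,
where `R` is the restriction of `μ_gr` to `lie_2`. -/
def E2 (φ : Ass 2) : Prop :=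
  partialD 1 φ + sub2 yA 0 (partialD 1 φ) - sub2 (xA + yA) 0 (partialD 1 φ) - muGr 2 φ = 0

/-- Equation (E3): `[x, φ(y,x)] + [y, φ(x,y)] = 0`. -/
def E3 (φ : Ass 2) : Prop := ⁅xA, sub2 yA xA φ⁆ + ⁅yA, φ⁆ = 0

/-- `ν^em(φ) = (φ(y,x), φ(x,y))`. -/
def nuEm (φ : Ass 2) : Fin 2 → Ass 2 := ![sub2 yA xA φ, φ]

/-- The space `grt_1^em` of solutions to the linearized emergent equations. -/
def grt1em : Set (Ass 2) := {φ | φ ∈ lieN 2 ∧ E1 φ ∧ E2 φ ∧ E3 φ}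

/-- The derivation `ρ(ũ)` on a word. -/
def rhoWord {N : ℕ} (u : Fin N → Ass N) : List (Fin N) → Ass N
  | [] => 0
  | a :: t => ⁅gen a, u a⁆ * wordProd t + gen a * rhoWord u t

/-- The tangential derivation `ρ(ũ)`, determined by `ρ(ũ)(x_i) = [x_i, u_i]`. -/
def rho {N : ℕ} (u : Fin N → Ass N) : Ass N →ₗ[ℚ] Ass N := liftWord (rhoWord u)

/-- The span of commutators in `ass_N`. -/
def trRel (N : ℕ) : Submodule ℚ (Ass N) :=
  Submodule.span ℚ {z | ∃ a b : Ass N, z = a * b - b * a}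

/-- The trace space `tr_N = ass_N/[ass_N, ass_N]`. -/
abbrev Tr (N : ℕ) : Type := Ass N ⧸ trRel N

/-- The projection `|·| : ass_N → tr_N`. -/
def trM (N : ℕ) : Ass N →ₗ[ℚ] Tr N := (trRel N).mkQ

/-- The divergence `div(ũ) = Σ_i |x_i (∂_i u_i)|`. -/
def divergence {N : ℕ} (u : Fin N → Ass N) : Tr N :=
  ∑ i, trM N (gen i * partialD i (u i))

/-- `ũ ∈ tder_N`: all components lie in `lie_N`. -/
def IsTDer {N : ℕ} (u : Fin N → Ass N) : Prop := ∀ i, u i ∈ lieN N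

/-- `ũ ∈ sder_N`. -/
def IsSDer {N : ℕ} (u : Fin N → Ass N) : Prop := IsTDer u ∧ rho u (∑ i, gen i) = 0

/-- `ũ ∈ krv_N`. -/
def IsKRV {N : ℕ} (u : Fin N → Ass N) : Prop :=
  IsSDer u ∧ ∃ f : Fin (N + 1) → Polynomial ℚ,
    divergence u =
      trM N (Polynomial.aeval (∑ i, gen i) (f 0)) +
        ∑ i : Fin N, trM N (Polynomial.aeval (gen i) (f i.succ))

/-- `ũ ∈ krv_N^0`. -/
def IsKRV0 {N : ℕ} (u : Fin N → Ass N) : Prop :=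
  IsSDer u ∧ ∃ cf : Fin N → ℚ, divergence u = ∑ i, cf i • trM N (gen i)

/-- The swap `u(x,y) ↦ u(y,x)`. -/
def swapA : Ass 2 →ₐ[ℚ] Ass 2 := sub2 yA xA

/-- `ũ ∈ krv_2^sym`. -/
def IsKRVsym (u : Fin 2 → Ass 2) : Prop := IsKRV u ∧ u 1 = swapA (u 0)


/-- The coproduct `Δ` on `ass_N`, with `Δ(x_i) = x_i ⊗ 1 + 1 ⊗ x_i`. -/
def comulA (N : ℕ) : Ass N →ₐ[ℚ] (Ass N ⊗[ℚ] Ass N) :=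
  FreeAlgebra.lift ℚ fun i => gen i ⊗ₜ[ℚ] (1 : Ass N) + (1 : Ass N) ⊗ₜ[ℚ] gen i

/-- `μ_{r,gr} = ((|·|∘mult) ⊗ id) ∘ (id ⊗ ((ι ⊗ id) ∘ Δ)) ∘ (id ⊗ μ_gr) ∘ Δ`. -/
def muR (N : ℕ) : Ass N →ₗ[ℚ] Tr N ⊗[ℚ] Ass N :=
  (TensorProduct.map ((trM N).comp (LinearMap.mul' ℚ (Ass N))) LinearMap.id).comp <|
    ((TensorProduct.assoc ℚ (Ass N) (Ass N) (Ass N)).symm.toLinearMap).comp <|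
      (TensorProduct.map LinearMap.id
          ((TensorProduct.map (iotaMap N) LinearMap.id).comp (comulA N).toLinearMap)).comp <|
        (TensorProduct.map LinearMap.id (muGr N)).comp (comulA N).toLinearMap

/-- `Alt(a ⊗ b) = a ⊗ b - b ⊗ a`. -/
def altMap (N : ℕ) : Tr N ⊗[ℚ] Tr N →ₗ[ℚ] Tr N ⊗[ℚ] Tr N :=
  LinearMap.id - (TensorProduct.comm ℚ (Tr N) (Tr N)).toLinearMap

/-- The linearized Turaev cobracket `δ_gr = Alt ∘ (id ⊗ |·|) ∘ μ_{r,gr}`. -/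
def Dgr (N : ℕ) : Ass N →ₗ[ℚ] Tr N ⊗[ℚ] Tr N :=
  (altMap N).comp ((TensorProduct.map LinearMap.id (trM N)).comp (muR N))

/-- Index type of the generators `t_{pq}` (`p ≠ q`) of the Drinfeld–Kohno Lie algebra. -/
def dkGenIdx (N : ℕ) : Type := {pq : Fin N × Fin N // pq.1 ≠ pq.2}

abbrev FLdk (N : ℕ) := FreeLieAlgebra ℚ (dkGenIdx N)

def tFree {N : ℕ} (p q : Fin N) (h : p ≠ q) : FLdk N := FreeLieAlgebra.of ℚ ⟨(p, q), h⟩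

/-- The defining relations of `dk_N`: symmetry, commutation and 4T. -/
def dkRels (N : ℕ) : Set (FLdk N) :=
  {z | ∃ (p q : Fin N) (h : p ≠ q), z = tFree p q h - tFree q p h.symm} ∪
  {z | ∃ (p q r s : Fin N) (hpq : p ≠ q) (hrs : r ≠ s),
      p ≠ r ∧ p ≠ s ∧ q ≠ r ∧ q ≠ s ∧ z = ⁅tFree p q hpq, tFree r s hrs⁆} ∪
  {z | ∃ (p q r : Fin N) (hpq : p ≠ q) (hqr : q ≠ r) (hpr : p ≠ r),
      z = ⁅tFree p q hpq + tFree q r hqr, tFree p r hpr⁆}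

def dkIdeal (N : ℕ) : LieIdeal ℚ (FLdk N) := LieSubmodule.lieSpan ℚ (FLdk N) (dkRels N)

/-- The Drinfeld–Kohno Lie algebra `dk_N`. -/
abbrev dk (N : ℕ) := FLdk N ⧸ dkIdeal N

/-- The generator `t_{pq}` of `dk_N`. -/
def tGen {N : ℕ} (p q : Fin N) (h : p ≠ q) : dk N :=
  LieSubmodule.Quotient.mk (N := dkIdeal N) (tFree p q h)

/-- Index type of the generators of the mixed Drinfeld–Kohno Lie algebra `dk_{m,n}`:
pairs of distinct indices in `Fin (m+n)`, not both poles (i.e., not both `< m`). -/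
def MIdx (m n : ℕ) : Type :=
  {pq : Fin (m + n) × Fin (m + n) // pq.1 ≠ pq.2 ∧ (m ≤ (pq.1 : ℕ) ∨ m ≤ (pq.2 : ℕ))}

abbrev FLmix (m n : ℕ) := FreeLieAlgebra ℚ (MIdx m n)

def tMix {m n : ℕ} (p q : Fin (m + n)) (h : p ≠ q)
    (hm : m ≤ (p : ℕ) ∨ m ≤ (q : ℕ)) : FLmix m n :=
  FreeLieAlgebra.of ℚ ⟨(p, q), h, hm⟩

/-- The defining relations of `dk_{m,n}`: exactly the symmetry, commutation and 4T relations
of `dk_{m+n}` involving only mixed pairs. -/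
def mixRels (m n : ℕ) : Set (FLmix m n) :=
  {z | ∃ (p q : Fin (m + n)) (h : p ≠ q) (hm : m ≤ (p : ℕ) ∨ m ≤ (q : ℕ)),
      z = tMix p q h hm - tMix q p h.symm hm.symm} ∪
  {z | ∃ (p q r s : Fin (m + n)) (hpq : p ≠ q) (hmpq : m ≤ (p : ℕ) ∨ m ≤ (q : ℕ))
      (hrs : r ≠ s) (hmrs : m ≤ (r : ℕ) ∨ m ≤ (s : ℕ)),
      p ≠ r ∧ p ≠ s ∧ q ≠ r ∧ q ≠ s ∧ z = ⁅tMix p q hpq hmpq, tMix r s hrs hmrs⁆} ∪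
  {z | ∃ (p q r : Fin (m + n)) (hpq : p ≠ q) (hmpq : m ≤ (p : ℕ) ∨ m ≤ (q : ℕ))
      (hqr : q ≠ r) (hmqr : m ≤ (q : ℕ) ∨ m ≤ (r : ℕ))
      (hpr : p ≠ r) (hmpr : m ≤ (p : ℕ) ∨ m ≤ (r : ℕ)),
      z = ⁅tMix p q hpq hmpq + tMix q r hqr hmqr, tMix p r hpr hmpr⁆}

def mixIdeal (m n : ℕ) : LieIdeal ℚ (FLmix m n) :=
  LieSubmodule.lieSpan ℚ (FLmix m n) (mixRels m n)

/-- The mixed Drinfeld–Kohno Lie algebra `dk_{m,n}`. -/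
abbrev dkmn (m n : ℕ) := FLmix m n ⧸ mixIdeal m n

lemma castAdd_ne_natAdd {m n : ℕ} (i : Fin m) (j : Fin n) :
    Fin.castAdd n i ≠ Fin.natAdd m j := by
  intro h
  have hv := congrArg Fin.val h
  simp only [Fin.coe_castAdd, Fin.coe_natAdd] at hv
  have := i.isLt
  omega

lemma natAdd_ne {m n : ℕ} {u v : Fin n} (h : u ≠ v) :
    Fin.natAdd m u ≠ Fin.natAdd m v := by
  intro hh
  exact h (by
    have hv := congrArg Fin.val hh
    simp only [Fin.coe_natAdd] at hv
    exact Fin.ext (by omega))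

lemma natAdd_le_left (m : ℕ) {n : ℕ} (j : Fin n) : m ≤ (Fin.natAdd m j : ℕ) := by
  simp only [Fin.coe_natAdd]; omega

/-- The generator `a_{ij}` of `dk_{m,n}` (0-indexed): `a_{ij} = t_{i(m+j)}`. -/
def aG {m n : ℕ} (i : Fin m) (j : Fin n) : dkmn m n :=
  LieSubmodule.Quotient.mk (N := mixIdeal m n)
    (tMix (Fin.castAdd n i) (Fin.natAdd m j) (castAdd_ne_natAdd i j)
      (Or.inr (natAdd_le_left m j)))

/-- The generator `c_{ij}` of `dk_{m,n}` (0-indexed): `c_{ij} = t_{(m+i)(m+j)}`. -/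
def cG {m n : ℕ} (u v : Fin n) (h : u ≠ v) : dkmn m n :=
  LieSubmodule.Quotient.mk (N := mixIdeal m n)
    (tMix (Fin.natAdd m u) (Fin.natAdd m v) (natAdd_ne h)
      (Or.inl (natAdd_le_left m u)))

/-- The Lie ideal `c` of `dk_{m,n}` generated by the `c_{ij}`. -/
def cId (m n : ℕ) : LieIdeal ℚ (dkmn m n) :=
  LieSubmodule.lieSpan ℚ (dkmn m n) {z | ∃ (u v : Fin n) (h : u ≠ v), z = cG u v h}

/-- The Lie ideal `[c,c]`. -/
def ccId (m n : ℕ) : LieIdeal ℚ (dkmn m n) := ⁅cId m n, cId m n⁆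

/-- The emergent Drinfeld–Kohno Lie algebra `edk_{m,n} = dk_{m,n}/[c,c]`. -/
abbrev edk (m n : ℕ) := dkmn m n ⧸ ccId m n

/-- Projection `dk_{m,n} → edk_{m,n}` as a function. -/
def eprojF (m n : ℕ) : dkmn m n → edk m n := LieSubmodule.Quotient.mk (N := ccId m n)

/-- Projection `dk_{m,n} → edk_{m,n}` as a `ℚ`-linear map. -/
def eproj (m n : ℕ) : dkmn m n →ₗ[ℚ] edk m n := (ccId m n).toSubmodule.mkQ

/-- `a_{ij}` in `edk_{m,n}`. -/
def aGE {m n : ℕ} (i : Fin m) (j : Fin n) : edk m n := eprojF m n (aG i j)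

/-- `c_{ij}` in `edk_{m,n}`. -/
def cGE {m n : ℕ} (u v : Fin n) (h : u ≠ v) : edk m n := eprojF m n (cG u v h)

/-- The canonical Lie algebra map `FreeLieAlgebra ℚ (Fin m) → ass_m`,
whose image is `lie_m`. -/
def toAssL (m : ℕ) : FreeLieAlgebra ℚ (Fin m) →ₗ⁅ℚ⁆ FreeAlgebra ℚ (Fin m) :=
  FreeLieAlgebra.lift ℚ (FreeAlgebra.ι ℚ)

/-- `u ↦ u_i` (at `dk` level): the Lie algebra map with `x_p ↦ a_{pi}`. -/
def uEldk {m n : ℕ} (i : Fin n) : FreeLieAlgebra ℚ (Fin m) →ₗ⁅ℚ⁆ dkmn m n :=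
  FreeLieAlgebra.lift ℚ fun p => aG p i

/-- `u ↦ u_i`: the Lie algebra map `lie_m → edk_{m,n}` with `x_p ↦ a_{pi}`. -/
def uEl {m n : ℕ} (i : Fin n) : FreeLieAlgebra ℚ (Fin m) →ₗ⁅ℚ⁆ edk m n :=
  FreeLieAlgebra.lift ℚ fun p => aGE p i

/-- Iterated bracketing `[a_{p₁ j}, [a_{p₂ j}, [… , [a_{p_d j}, ξ]…]]]`. -/
def adWApply {m n : ℕ} (j : Fin n) : List (Fin m) → edk m n → edk m n
  | [], ξ => ξ
  | p :: t, ξ => ⁅aGE p j, adWApply j t ξ⁆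


/-- `w ↦ w_{uv}`: the linear map `ass_m → edk_{m,n}` with
`1 ↦ c_{uv}` and `(x_{p₁}⋯x_{p_d}) ↦ [a_{p₁ v}, [… [a_{p_d v}, c_{uv}]…]]`. -/
def wEl {m n : ℕ} (u v : Fin n) (h : u ≠ v) : Ass m →ₗ[ℚ] edk m n :=
  liftWord fun l => adWApply v l (cGE u v h)

/-- `ad_w^{(l)}(ξ)`, linear in `w`. -/
def adOp {m n : ℕ} (l : Fin n) (ξ : edk m n) : Ass m →ₗ[ℚ] edk m n :=
  liftWord fun lst => adWApply l lst ξ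

/-- Degree-`k` part of the free Lie algebra (generators of degree 1), realized as the
preimage of the degree-`k` part of the free associative algebra under the canonical map. -/
def flHomog (X : Type) (k : ℕ) : Submodule ℚ (FreeLieAlgebra ℚ X) :=
  Submodule.comap
    (FreeLieAlgebra.lift ℚ (FreeAlgebra.ι ℚ (X := X)) :
      FreeLieAlgebra ℚ X →ₗ⁅ℚ⁆ FreeAlgebra ℚ X).toLinearMap
    (homogS X k)

/-- Degree-`k` part of `edk_{m,n}`. -/
def edkHomog (m n : ℕ) (k : ℕ) : Submodule ℚ (edk m n) :=
  (((flHomog (MIdx m n) k).map (mixIdeal m n).toSubmodule.mkQ)).map (eproj m n)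

-- Fin helper lemmas
lemma castSucc_ne_of_ne {n : ℕ} {u v : Fin n} (h : u ≠ v) :
    Fin.castSucc u ≠ Fin.castSucc v := fun hh => h (Fin.castSucc_injective n hh)

lemma succ_ne_of_ne {n : ℕ} {u v : Fin n} (h : u ≠ v) :
    Fin.succ u ≠ Fin.succ v := fun hh => h (Fin.succ_injective n hh)

lemma castSucc_ne_last {n : ℕ} (u : Fin n) : Fin.castSucc u ≠ Fin.last n :=
  (Fin.castSucc_lt_last u).ne

lemma castSucc_ne_succ_of_le {n : ℕ} {u v : Fin n} (h : u ≤ v) :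
    Fin.castSucc u ≠ Fin.succ v := by
  intro hh
  have hv := congrArg Fin.val hh
  simp only [Fin.coe_castSucc, Fin.val_succ] at hv
  have := Fin.le_def.mp h
  omega

/-- `D` is the pole coface map `δ_k : dk_{m,n} → dk_{m+1,n}`, `0 ≤ k ≤ m`
(1-indexed `k`; `k = 0` is extension on the left). -/
def IsDeltaPole (m n : ℕ) (k : ℕ) (D : dkmn m n →ₗ⁅ℚ⁆ dkmn (m + 1) n) : Prop :=
  (∀ (i : Fin m) (j : Fin n),
     (((i : ℕ) + 1 < k) → D (aG i j) = aG (Fin.castSucc i) j) ∧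
     (((i : ℕ) + 1 = k) → D (aG i j) = aG (Fin.castSucc i) j + aG (Fin.succ i) j) ∧
     ((k < (i : ℕ) + 1) → D (aG i j) = aG (Fin.succ i) j)) ∧
  (∀ (u v : Fin n) (h : u ≠ v), D (cG u v h) = cG u v h)

/-- `D` is the strand coface map `δ_{m+κ} : dk_{m,n} → dk_{m,n+1}`, `1 ≤ κ ≤ n+1`
(1-indexed strand `κ`; `κ = n+1` is extension on the right). -/
def IsDeltaStrand (m n : ℕ) (κ : ℕ) (D : dkmn m n →ₗ⁅ℚ⁆ dkmn m (n + 1)) : Prop :=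
  (∀ (i : Fin m) (j : Fin n),
     (((j : ℕ) + 1 < κ) → D (aG i j) = aG i (Fin.castSucc j)) ∧
     (((j : ℕ) + 1 = κ) → D (aG i j) = aG i (Fin.castSucc j) + aG i (Fin.succ j)) ∧
     ((κ < (j : ℕ) + 1) → D (aG i j) = aG i (Fin.succ j))) ∧
  (∀ (u v : Fin n) (h : u < v),
     (((v : ℕ) + 1 < κ) →
        D (cG u v h.ne) = cG (Fin.castSucc u) (Fin.castSucc v) (castSucc_ne_of_ne h.ne)) ∧
     (((v : ℕ) + 1 = κ) →
        D (cG u v h.ne) = cG (Fin.castSucc u) (Fin.castSucc v) (castSucc_ne_of_ne h.ne)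
          + cG (Fin.castSucc u) (Fin.succ v) (castSucc_ne_succ_of_le h.le)) ∧
     (((u : ℕ) + 1 < κ ∧ κ < (v : ℕ) + 1) →
        D (cG u v h.ne) = cG (Fin.castSucc u) (Fin.succ v) (castSucc_ne_succ_of_le h.le)) ∧
     (((u : ℕ) + 1 = κ) →
        D (cG u v h.ne) = cG (Fin.castSucc u) (Fin.succ v) (castSucc_ne_succ_of_le h.le)
          + cG (Fin.succ u) (Fin.succ v) (succ_ne_of_ne h.ne)) ∧
     ((κ < (u : ℕ) + 1) →
        D (cG u v h.ne) = cG (Fin.succ u) (Fin.succ v) (succ_ne_of_ne h.ne)))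

/-- `T` is `ϑ_{m+1} : dk_{m+1,n} → dk_{m,n+1}` (the last pole becomes the first strand). -/
def IsTheta (m n : ℕ) (T : dkmn (m + 1) n →ₗ⁅ℚ⁆ dkmn m (n + 1)) : Prop :=
  (∀ (i : Fin (m + 1)) (j : Fin n),
     (∀ hi : (i : ℕ) < m, T (aG i j) = aG ⟨i, hi⟩ (Fin.succ j)) ∧
     ((i : ℕ) = m → T (aG i j) = cG 0 (Fin.succ j) (Fin.succ_ne_zero j).symm)) ∧
  (∀ (u v : Fin n) (h : u ≠ v), T (cG u v h) = cG (Fin.succ u) (Fin.succ v) (succ_ne_of_ne h))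

/-- The coface map `d_k : dk_{m,n} → dk_{m,n+1}`, built from the data of the pole
cofaces, the strand cofaces, and `ϑ_{m+1}`. -/
def coface (m n : ℕ) (Dp : ℕ → (dkmn m n →ₗ⁅ℚ⁆ dkmn (m + 1) n))
    (Ds : ℕ → (dkmn m n →ₗ⁅ℚ⁆ dkmn m (n + 1)))
    (T : dkmn (m + 1) n →ₗ⁅ℚ⁆ dkmn m (n + 1)) (k : ℕ) :
    dkmn m n →ₗ⁅ℚ⁆ dkmn m (n + 1) :=
  if k ≤ m then T.comp (Dp k) else Ds (k - m)

/-- The algebra map `ass_{m'+1} → ass_{m'}` with `x_p ↦ x_p` (`p < m'`) and `x_{m'} ↦ 0`. -/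
def setLast0A (m' : ℕ) : Ass (m' + 1) →ₐ[ℚ] Ass m' :=
  FreeAlgebra.lift ℚ fun p : Fin (m' + 1) =>
    if h : (p : ℕ) < m' then gen ⟨p, h⟩ else 0

/-- The Lie algebra map `FreeLie (Fin (m'+1)) → FreeLie (Fin m')` setting the last
generator to `0`. -/
def flSetLast0 (m' : ℕ) : FreeLieAlgebra ℚ (Fin (m' + 1)) →ₗ⁅ℚ⁆ FreeLieAlgebra ℚ (Fin m') :=
  FreeLieAlgebra.lift ℚ fun p : Fin (m' + 1) =>
    if h : (p : ℕ) < m' then FreeLieAlgebra.of ℚ ⟨p, h⟩ else 0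

/-!
`ϑ` sends each `c_{ij}` to a `c_{kl}`, hence `c` into `c` and `[c,c]` into `[c,c]`, so it descends
to `edk`, in which the image of `c` is abelian. The formula for `w_{ij}` follows by induction on
words: a leading letter `x_m` contributes `ϑ(a_{mj}) = c_{1(j+1)}`, which commutes with the
`c`-element obtained from the rest of the word. The formula for `u_i` follows by induction over Lie monomials: on brackets
it is preserved because `∂_m [U, V] = U ∂_m V - V ∂_m U` (Lie elements have no constant term),
`[u_{i+1}, w_{1(i+1)}] = (u w)_{1(i+1)}`, and two `w`-terms commute.
-/

section Words

variable {N : ℕ}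

lemma wordProd_cons (a : Fin N) (l : List (Fin N)) :
    wordProd (a :: l) = gen a * wordProd l := by
  simp [wordProd]

lemma basisFreeMonoid_apply (w : FreeMonoid (Fin N)) :
    FreeAlgebra.basisFreeMonoid ℚ (Fin N) w = wordProd w.toList := by
  simp only [FreeAlgebra.basisFreeMonoid, FreeAlgebra.equivMonoidAlgebraFreeMonoid,
    Module.Basis.map_apply, Finsupp.coe_basisSingleOne, LinearEquiv.trans_symm,
    LinearEquiv.trans_apply, MonoidAlgebra.coeffLinearEquiv_symm_apply,
    MonoidAlgebra.ofCoeff_single, AlgEquiv.coe_symm_toLinearEquiv, AlgEquiv.ofAlgHom_symm_apply,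
    MonoidAlgebra.lift_single, FreeMonoid.lift_apply, one_smul, wordProd]
  rfl

lemma liftWord_wordProd {A : Type} [AddCommGroup A] [Module ℚ A]
    (f : List (Fin N) → A) (l : List (Fin N)) : liftWord f (wordProd l) = f l := by
  simpa [liftWord, basisFreeMonoid_apply] using
    (FreeAlgebra.basisFreeMonoid ℚ (Fin N)).constr_basis ℚ (fun w => f w.toList)
      (FreeMonoid.ofList l)

@[elab_as_elim]
lemma Ass.induction_on_words {P : Ass N → Prop} (word : ∀ l, P (wordProd l))
    (add : ∀ a b, P a → P b → P (a + b)) (smul : ∀ (q : ℚ) a, P a → P (q • a))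
    (z : Ass N) : P z := by
  have hz : z ∈ Submodule.span ℚ (Set.range (FreeAlgebra.basisFreeMonoid ℚ (Fin N))) := by
    rw [Module.Basis.span_eq]; trivial
  induction hz using Submodule.span_induction with
  | mem x hx =>
    obtain ⟨w, rfl⟩ := hx
    rw [basisFreeMonoid_apply]
    exact word _
  | zero => simpa using smul 0 1 (by simpa [wordProd] using word [])
  | add a b _ _ ha hb => exact add a b ha hb
  | smul q a _ ha => exact smul q a ha

lemma partialD_wordProd (i : Fin N) (l : List (Fin N)) :
    partialD i (wordProd l) =
      match l.getLast? with
      | some a => if a = i then wordProd l.dropLast else 0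
      | none => 0 :=
  liftWord_wordProd _ _

lemma partialD_gen (i p : Fin N) : partialD i (gen p) = if p = i then 1 else 0 := by
  simpa [wordProd] using partialD_wordProd i [p]

lemma partialD_algebraMap (i : Fin N) (r : ℚ) : partialD i (algebraMap ℚ (Ass N) r) = 0 := by
  rw [Algebra.algebraMap_eq_smul_one, map_smul, show (1 : Ass N) = wordProd [] from rfl,
    partialD_wordProd]
  simp

lemma partialD_mul_gen (i p : Fin N) (a : Ass N) :
    partialD i (a * gen p) = if p = i then a else 0 := by
  induction a using Ass.induction_on_words with
  | word l =>
    rw [show wordProd l * gen p = wordProd (l ++ [p]) by simp [wordProd],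
      partialD_wordProd]
    simp
  | add a b ha hb => rw [add_mul, map_add, ha, hb]; split_ifs <;> simp
  | smul q a ha => rw [smul_mul_assoc, map_smul, ha]; split_ifs <;> simp

/-- `algebraMapInv` is the augmentation (constant term) of `ass_N`. -/
lemma partialD_mul (i : Fin N) (a b : Ass N) :
    partialD i (a * b) = a * partialD i b + FreeAlgebra.algebraMapInv b • partialD i a := by
  induction b using FreeAlgebra.induction generalizing a with
  | grade0 r =>
    rw [← Algebra.commutes, ← Algebra.smul_def, map_smul, partialD_algebraMap,
      FreeAlgebra.algebraMap_leftInverse, mul_zero, zero_add]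
  | grade1 p =>
    rw [← gen, partialD_mul_gen, partialD_gen]
    simp [gen, FreeAlgebra.algebraMapInv]
  | mul b c hb hc =>
    rw [← mul_assoc, hc, hb, hc, map_mul, mul_add, mul_smul_comm, mul_assoc]
    module
  | add b c hb hc =>
    rw [mul_add, map_add, hb, hc, map_add, map_add, add_smul, mul_add]
    abel

end Words

section FreeLie

variable {R X : Type*} [CommRing R]

lemma FreeLieAlgebra.lieSpan_range_of :
    LieSubalgebra.lieSpan R (FreeLieAlgebra R X) (Set.range (FreeLieAlgebra.of R)) = ⊤ := by
  set S := LieSubalgebra.lieSpan R (FreeLieAlgebra R X) (Set.range (FreeLieAlgebra.of R))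
  let g : FreeLieAlgebra R X →ₗ⁅R⁆ S :=
    FreeLieAlgebra.lift R fun x => ⟨FreeLieAlgebra.of R x, LieSubalgebra.subset_lieSpan ⟨x, rfl⟩⟩
  have hg : S.incl.comp g = LieHom.id := FreeLieAlgebra.hom_ext fun x => by simp [g]
  refine eq_top_iff.mpr fun U _ => ?_
  rw [← LieHom.id_apply (R := R) U, ← hg]
  exact (g U).2

@[elab_as_elim]
lemma FreeLieAlgebra.induction_on {P : FreeLieAlgebra R X → Prop}
    (of : ∀ x, P (FreeLieAlgebra.of R x)) (zero : P 0) (add : ∀ U V, P U → P V → P (U + V))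
    (smul : ∀ (r : R) U, P U → P (r • U)) (lie : ∀ U V, P U → P V → P ⁅U, V⁆)
    (U : FreeLieAlgebra R X) : P U :=
  LieSubalgebra.lieSpan_induction (R := R) (p := fun U _ => P U)
    (mem := by rintro _ ⟨x, rfl⟩; exact of x) (zero := zero)
    (add := fun U V _ _ => add U V) (smul := fun r U _ => smul r U)
    (lie := fun U V _ _ => lie U V)
    (FreeLieAlgebra.lieSpan_range_of (R := R) ▸ LieSubalgebra.mem_top U)

end FreeLie

section LieWords

variable {m : ℕ}

lemma toAssL_of (p : Fin m) : toAssL m (FreeLieAlgebra.of ℚ p) = gen p :=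
  FreeLieAlgebra.lift_of_apply _ _

lemma algebraMapInv_toAssL (U : FreeLieAlgebra ℚ (Fin m)) :
    FreeAlgebra.algebraMapInv (toAssL m U) = 0 := by
  induction U using FreeLieAlgebra.induction_on with
  | of p => simp [toAssL_of, gen, FreeAlgebra.algebraMapInv]
  | zero => simp
  | add U V hU hV => simp [hU, hV]
  | smul r U hU => simp [hU]
  | lie U V hU hV => simp [Ring.lie_def, hU, hV]

lemma partialD_toAssL_lie (i : Fin m) (U V : FreeLieAlgebra ℚ (Fin m)) :
    partialD i (toAssL m ⁅U, V⁆)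
      = toAssL m U * partialD i (toAssL m V) - toAssL m V * partialD i (toAssL m U) := by
  simp [Ring.lie_def, partialD_mul, algebraMapInv_toAssL]

lemma setLast0A_gen_castSucc (p : Fin m) : setLast0A m (gen p.castSucc) = gen p := by
  simp [setLast0A, gen]

lemma setLast0A_gen_last : setLast0A m (gen (Fin.last m)) = 0 := by
  simp [setLast0A, gen]

lemma flSetLast0_of_castSucc (p : Fin m) :
    flSetLast0 m (FreeLieAlgebra.of ℚ p.castSucc) = FreeLieAlgebra.of ℚ p := by
  simp [flSetLast0]

lemma flSetLast0_of_last : flSetLast0 m (FreeLieAlgebra.of ℚ (Fin.last m)) = 0 := by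
  simp [flSetLast0]

lemma setLast0A_toAssL (U : FreeLieAlgebra ℚ (Fin (m + 1))) :
    setLast0A m (toAssL (m + 1) U) = toAssL m (flSetLast0 m U) := by
  suffices (setLast0A m).toLieHom.comp (toAssL (m + 1)) = (toAssL m).comp (flSetLast0 m) from
    LieHom.congr_fun this U
  refine FreeLieAlgebra.hom_ext fun p => ?_
  induction p using Fin.lastCases with
  | last => simp [toAssL_of, setLast0A_gen_last, flSetLast0_of_last]
  | cast p => simp [toAssL_of, setLast0A_gen_castSucc, flSetLast0_of_castSucc]

lemma setLast0A_partialD_toAssL_lie (i : Fin (m + 1)) (U V : FreeLieAlgebra ℚ (Fin (m + 1))) :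
    setLast0A m (partialD i (toAssL (m + 1) ⁅U, V⁆)) =
      toAssL m (flSetLast0 m U) * setLast0A m (partialD i (toAssL (m + 1) V)) -
        toAssL m (flSetLast0 m V) * setLast0A m (partialD i (toAssL (m + 1) U)) := by
  rw [partialD_toAssL_lie, map_sub, map_mul, map_mul, setLast0A_toAssL, setLast0A_toAssL]

end LieWords

section LieQuotient

variable {R L L' : Type*} [CommRing R] [LieRing L] [LieAlgebra R L] [LieRing L'] [LieAlgebra R L']

def LieIdeal.mkQ (I : LieIdeal R L) : L →ₗ⁅R⁆ L ⧸ I :=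
  { (I : Submodule R L).mkQ with map_lie' := rfl }

lemma LieIdeal.mkQ_surjective (I : LieIdeal R L) : Function.Surjective I.mkQ :=
  Submodule.mkQ_surjective _

def LieIdeal.mapQ {I : LieIdeal R L} {J : LieIdeal R L'} (f : L →ₗ⁅R⁆ L') (h : I ≤ J.comap f) :
    L ⧸ I →ₗ⁅R⁆ L' ⧸ J where
  toLinearMap := Submodule.mapQ I.toSubmodule J.toSubmodule f.toLinearMap fun _ hx => h hx
  map_lie' {x y} := by
    obtain ⟨a, rfl⟩ := I.mkQ_surjective x
    obtain ⟨b, rfl⟩ := I.mkQ_surjective y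
    exact congrArg J.mkQ (f.map_lie a b)

lemma LieIdeal.mapQ_mkQ {I : LieIdeal R L} {J : LieIdeal R L'} (f : L →ₗ⁅R⁆ L')
    (h : I ≤ J.comap f) (x : L) : LieIdeal.mapQ f h (I.mkQ x) = J.mkQ (f x) :=
  rfl

end LieQuotient

section Emergent

variable {m n : ℕ}

def cIdE (m n : ℕ) : LieIdeal ℚ (edk m n) := (cId m n).map (ccId m n).mkQ

lemma cG_mem_cId (u v : Fin n) (h : u ≠ v) : cG u v h ∈ cId m n :=
  LieSubmodule.subset_lieSpan ⟨u, v, h, rfl⟩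

lemma cGE_mem_cIdE (u v : Fin n) (h : u ≠ v) : cGE u v h ∈ cIdE m n :=
  LieIdeal.mem_map (cG_mem_cId u v h)

lemma lie_eq_zero_of_mem_cIdE {x y : edk m n} (hx : x ∈ cIdE m n) (hy : y ∈ cIdE m n) :
    ⁅x, y⁆ = 0 := by
  obtain ⟨⟨a, ha⟩, rfl⟩ := LieIdeal.mem_map_of_surjective (LieIdeal.mkQ_surjective _) hx
  obtain ⟨⟨b, hb⟩, rfl⟩ := LieIdeal.mem_map_of_surjective (LieIdeal.mkQ_surjective _) hy
  rw [← LieHom.map_lie]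
  exact (LieSubmodule.Quotient.mk_eq_zero' (N := ccId m n)).mpr (LieSubmodule.lie_mem_lie ha hb)

lemma wEl_one (u v : Fin n) (h : u ≠ v) : wEl u v h (1 : Ass m) = cGE u v h :=
  liftWord_wordProd _ []

lemma aGE_lie_wEl (p : Fin m) (u v : Fin n) (h : u ≠ v) (w : Ass m) :
    ⁅aGE p v, wEl u v h w⁆ = wEl u v h (gen p * w) := by
  induction w using Ass.induction_on_words with
  | word l => rw [← wordProd_cons, wEl, liftWord_wordProd, liftWord_wordProd, adWApply]
  | add a b ha hb => rw [map_add, lie_add, ha, hb, mul_add, map_add]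
  | smul q a ha => rw [map_smul, lie_smul, ha, mul_smul_comm, map_smul]

lemma wEl_mem_cIdE (u v : Fin n) (h : u ≠ v) (w : Ass m) : wEl u v h w ∈ cIdE m n := by
  induction w using Ass.induction_on_words with
  | word l =>
    induction l with
    | nil => rw [show wordProd [] = (1 : Ass m) from rfl, wEl_one]; exact cGE_mem_cIdE u v h
    | cons p l ih => rw [wordProd_cons, ← aGE_lie_wEl]; exact (cIdE m n).lie_mem ih
  | add a b ha hb => rw [map_add]; exact add_mem ha hb
  | smul q a ha => rw [map_smul]; exact (cIdE m n).smul_mem q ha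

lemma uEl_of (j : Fin n) (p : Fin m) : uEl j (FreeLieAlgebra.of ℚ p) = aGE p j :=
  FreeLieAlgebra.lift_of_apply _ _

lemma uEl_lie_wEl (u v : Fin n) (h : u ≠ v) (U : FreeLieAlgebra ℚ (Fin m)) (w : Ass m) :
    ⁅uEl v U, wEl u v h w⁆ = wEl u v h (toAssL m U * w) := by
  induction U using FreeLieAlgebra.induction_on generalizing w with
  | of p => rw [uEl_of, toAssL_of, aGE_lie_wEl]
  | zero => rw [map_zero, map_zero, zero_lie, zero_mul, map_zero]
  | add U V hU hV => rw [map_add, map_add, add_lie, hU, hV, add_mul, map_add]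
  | smul r U hU => rw [map_smul, map_smul, smul_lie, hU, smul_mul_assoc, map_smul]
  | lie U V hU hV =>
    rw [LieHom.map_lie, LieHom.map_lie, lie_lie, hU, hV, hU, hV, Ring.lie_def, sub_mul, map_sub,
      mul_assoc, mul_assoc]

end Emergent

namespace IsTheta

variable {m n : ℕ} {T : dkmn (m + 1) n →ₗ⁅ℚ⁆ dkmn m (n + 1)}

lemma apply_aG_castSucc (hT : IsTheta m n T) (p : Fin m) (j : Fin n) :
    T (aG p.castSucc j) = aG p j.succ :=
  (hT.1 p.castSucc j).1 p.isLt

lemma apply_aG_last (hT : IsTheta m n T) (j : Fin n) :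
    T (aG (Fin.last m) j) = cG 0 j.succ (Fin.succ_ne_zero j).symm :=
  (hT.1 (Fin.last m) j).2 rfl

lemma map_cId_le (hT : IsTheta m n T) : (cId (m + 1) n).map T ≤ cId m (n + 1) := by
  rw [LieIdeal.map_le_iff_le_comap, cId, LieSubmodule.lieSpan_le]
  rintro _ ⟨u, v, huv, rfl⟩
  rw [SetLike.mem_coe, LieIdeal.mem_comap, hT.2 u v huv]
  exact cG_mem_cId _ _ _

lemma ccId_le_comap (hT : IsTheta m n T) : ccId (m + 1) n ≤ (ccId m (n + 1)).comap T := by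
  rw [← LieIdeal.map_le_iff_le_comap]
  exact (LieIdeal.map_bracket_le T).trans (LieSubmodule.mono_lie hT.map_cId_le hT.map_cId_le)

def edkHom (hT : IsTheta m n T) : edk (m + 1) n →ₗ⁅ℚ⁆ edk m (n + 1) :=
  LieIdeal.mapQ T hT.ccId_le_comap

lemma edkHom_eprojF (hT : IsTheta m n T) (z : dkmn (m + 1) n) :
    hT.edkHom (eprojF (m + 1) n z) = eprojF m (n + 1) (T z) :=
  LieIdeal.mapQ_mkQ T hT.ccId_le_comap z

lemma edkHom_aGE_castSucc (hT : IsTheta m n T) (p : Fin m) (j : Fin n) :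
    hT.edkHom (aGE p.castSucc j) = aGE p j.succ :=
  congrArg (eprojF m (n + 1)) (hT.apply_aG_castSucc p j)

lemma edkHom_aGE_last (hT : IsTheta m n T) (j : Fin n) :
    hT.edkHom (aGE (Fin.last m) j) = cGE 0 j.succ (Fin.succ_ne_zero j).symm :=
  congrArg (eprojF m (n + 1)) (hT.apply_aG_last j)

lemma edkHom_wEl (hT : IsTheta m n T) (u v : Fin n) (h : u ≠ v) (w : Ass (m + 1)) :
    hT.edkHom (wEl u v h w) = wEl u.succ v.succ (succ_ne_of_ne h) (setLast0A m w) := by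
  induction w using Ass.induction_on_words with
  | word l =>
    induction l with
    | nil =>
      rw [show wordProd [] = (1 : Ass (m + 1)) from rfl, wEl_one, map_one, wEl_one]
      exact congrArg (eprojF m (n + 1)) (hT.2 u v h)
    | cons p l ih =>
      rw [wordProd_cons, ← aGE_lie_wEl, LieHom.map_lie, ih, map_mul]
      induction p using Fin.lastCases with
      | last =>
        rw [setLast0A_gen_last, zero_mul, map_zero, hT.edkHom_aGE_last]
        exact lie_eq_zero_of_mem_cIdE (cGE_mem_cIdE _ _ _) (wEl_mem_cIdE _ _ _ _)
      | cast p => rw [setLast0A_gen_castSucc, ← aGE_lie_wEl, hT.edkHom_aGE_castSucc]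
  | add a b ha hb => rw [map_add, map_add, ha, hb, map_add, map_add]
  | smul q a ha => rw [map_smul, map_smul, ha, map_smul, map_smul]

lemma edkHom_uEl (hT : IsTheta m n T) (i : Fin n) (U : FreeLieAlgebra ℚ (Fin (m + 1))) :
    hT.edkHom (uEl i U) = uEl i.succ (flSetLast0 m U) +
      wEl 0 i.succ (Fin.succ_ne_zero i).symm
        (setLast0A m (partialD (Fin.last m) (toAssL (m + 1) U))) := by
  induction U using FreeLieAlgebra.induction_on with
  | of p =>
    rw [uEl_of, toAssL_of, partialD_gen]
    induction p using Fin.lastCases with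
    | last =>
      rw [if_pos rfl, map_one, wEl_one, flSetLast0_of_last, map_zero, zero_add,
        hT.edkHom_aGE_last]
    | cast p =>
      rw [if_neg (Fin.castSucc_lt_last p).ne, map_zero, map_zero, add_zero,
        flSetLast0_of_castSucc, uEl_of, hT.edkHom_aGE_castSucc]
  | zero => simp
  | add U V hU hV => simp only [map_add, hU, hV]; abel
  | smul r U hU => simp only [map_smul, hU, smul_add]
  | lie U V hU hV =>
    rw [LieHom.map_lie (uEl i), LieHom.map_lie hT.edkHom, hU, hV, LieHom.map_lie (flSetLast0 m),
      LieHom.map_lie (uEl i.succ), setLast0A_partialD_toAssL_lie]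
    generalize setLast0A m (partialD (Fin.last m) (toAssL (m + 1) U)) = δU
    generalize setLast0A m (partialD (Fin.last m) (toAssL (m + 1) V)) = δV
    rw [map_sub, lie_add, add_lie, add_lie, ← lie_skew (wEl _ _ _ δU), uEl_lie_wEl, uEl_lie_wEl,
      lie_eq_zero_of_mem_cIdE (wEl_mem_cIdE _ _ _ δU) (wEl_mem_cIdE _ _ _ δV)]
    abel

end IsTheta

/-- `ϑ_m` preserves `[c,c]` and the induced map on `edk` is
given by the stated formulas. -/
theorem statement11 (m' n : ℕ)
    (T : dkmn (m' + 1) n →ₗ⁅ℚ⁆ dkmn m' (n + 1)) (hT : IsTheta m' n T) :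
    (∀ z ∈ ccId (m' + 1) n, T z ∈ ccId m' (n + 1)) ∧
    ∃ Te : edk (m' + 1) n →ₗ⁅ℚ⁆ edk m' (n + 1),
      (∀ z, Te (eprojF (m' + 1) n z) = eprojF m' (n + 1) (T z)) ∧
      (∀ (U : FreeLieAlgebra ℚ (Fin (m' + 1))) (i : Fin n),
        Te (uEl i U) = uEl (Fin.succ i) (flSetLast0 m' U) +
          wEl 0 (Fin.succ i) (Fin.succ_ne_zero i).symm
            (setLast0A m' (partialD (Fin.last m') (toAssL (m' + 1) U)))) ∧
      (∀ (w : Ass (m' + 1)) (u v : Fin n) (h : u ≠ v),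
        Te (wEl u v h w) =
          wEl (Fin.succ u) (Fin.succ v) (succ_ne_of_ne h) (setLast0A m' w)) :=
  ⟨fun _ hz => hT.ccId_le_comap hz, hT.edkHom, hT.edkHom_eprojF,
    fun U i => hT.edkHom_uEl i U, fun w u v h => hT.edkHom_wEl u v h w⟩

end
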